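/- arXiv:2012.00356 — 2 statements merged into one kernel-verified Lean document; each statement's English description precedes it below -/
import Mathlib

section
/- Let G be a finite graph, q a fixed vertex, and suppose a vertex v with maximum distance d_G(v,q) from q is removed (v ≠ q). Then for every remaining vertex u in the same connected component of q, the distance from u to q in G − v equals the distance from u to q in G. -/
/-!
A shortest `u`–`q` walk in `G` cannot pass through a vertex `v ≠ u`: the part after `v` would be
shorter, giving `d(v, q) < d(u, q)`, against the maximality of `d(v, q)`. So some shortest walk of
`G` survives in `G − v`, while conversely every walk of `G − v` is one of `G`.
-/

namespace SimpleGraph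

variable {V W : Type*} {G : SimpleGraph V}

theorem edist_map_le {G' : SimpleGraph W} (f : G →g G') (u v : V) :
    G'.edist (f u) (f v) ≤ G.edist u v := by
  by_cases hr : G.Reachable u v
  · obtain ⟨p, hp⟩ := hr.exists_walk_length_eq_edist
    simpa [hp] using edist_le (p.map f)
  · simp [edist_eq_top_of_not_reachable hr]

theorem Walk.length_induce (s : Set V) {u w : V} (p : G.Walk u w) (hp : ∀ x ∈ p.support, x ∈ s) :
    (p.induce s hp).length = p.length :=
  (Walk.length_map _ _).symm.trans (congrArg Walk.length (p.map_induce hp))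

theorem Walk.edist_lt_of_mem_support {u v w : V} (p : G.Walk u w) (hp : p.length = G.edist u w)
    (hv : v ∈ p.support) (hvu : v ≠ u) : G.edist v w < G.edist u w := by
  classical
  have hsplit : p.length = (p.takeUntil v hv).length + (p.dropUntil v hv).length := by
    rw [← Walk.length_append, p.take_spec hv]
  have htake : (p.takeUntil v hv).length ≠ 0 := fun h ↦ hvu (Walk.eq_of_length_eq_zero h).symm
  calc G.edist v w ≤ (p.dropUntil v hv).length := edist_le _
    _ < p.length := by exact_mod_cast (by omega : (p.dropUntil v hv).length < p.length)
    _ = G.edist u w := hp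

end SimpleGraph

open SimpleGraph

theorem remove_farthest_preserves_dist_general {V : Type*} (G : SimpleGraph V)
    (q v : V) (hvq : v ≠ q)
    (hmax : ∀ w : V, G.edist w q ≤ G.edist v q)
    (u : V) (hu : u ≠ v)
    (hreach : (G.induce {x : V | x ≠ v}).Reachable ⟨u, hu⟩ ⟨q, hvq.symm⟩) :
    (G.induce {x : V | x ≠ v}).edist ⟨u, hu⟩ ⟨q, hvq.symm⟩ = G.edist u q := by
  refine le_antisymm ?_ (edist_map_le (Embedding.induce _).toHom _ _)
  have hreachG : G.Reachable u q := hreach.map (Embedding.induce _).toHom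
  obtain ⟨p, hp⟩ := hreachG.exists_walk_length_eq_edist
  have hv : v ∉ p.support := fun hv ↦
    (p.edist_lt_of_mem_support hp hv hu.symm).not_ge (hmax u)
  have hsupp : ∀ x ∈ p.support, x ∈ {x : V | x ≠ v} := fun x hx hxv ↦ hv (hxv ▸ hx)
  calc (G.induce {x : V | x ≠ v}).edist ⟨u, hu⟩ ⟨q, hvq.symm⟩ ≤ (p.induce _ hsupp).length :=
        edist_le _
    _ = G.edist u q := by rw [Walk.length_induce, hp]

/-- If `v ≠ q` is a vertex at maximum distance from `q` in a finite connected graph `G`,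
then for every vertex `u ≠ v` reachable from `q` in `G − v`, the distance from `u` to `q`
in `G − v` equals the distance in `G`. -/
theorem remove_farthest_preserves_dist {V : Type*} [Fintype V] (G : SimpleGraph V)
    (hconn : G.Connected) (q v : V) (hvq : v ≠ q)
    (hmax : ∀ w : V, G.edist w q ≤ G.edist v q)
    (u : V) (hu : u ≠ v)
    (hreach : (G.induce {x : V | x ≠ v}).Reachable ⟨u, hu⟩ ⟨q, hvq.symm⟩) :
    (G.induce {x : V | x ≠ v}).edist ⟨u, hu⟩ ⟨q, hvq.symm⟩ = G.edist u q :=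
  remove_farthest_preserves_dist_general G q v hvq hmax u hu hreach
end

section
/- Greedy peeling computes the maximum min-degree subgraph: in the peeling sequence G = G_0 ⊋ G_1 ⊋ ... ⊋ G_n = ∅ where each step removes a vertex of minimum degree, the maximum over t of δ_min(G_t) (over nonempty G_t) equals the maximum of δ_min(H) over all nonempty induced subgraphs H of G. -/
lemma exists_last_aux {P : ℕ → Prop} (n : ℕ) (h0 : P 0) (hn : ¬ P n) :
    ∃ t < n, P t ∧ ¬ P (t + 1) := by
  induction n with
  | zero => exact absurd h0 hn
  | succ m ih =>
    by_cases hm : P m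
    · exact ⟨m, Nat.lt_succ_self m, hm, hn⟩
    · obtain ⟨t, ht, h1, h2⟩ := ih hm
      exact ⟨t, ht.trans (Nat.lt_succ_self m), h1, h2⟩


/-- The degree of `v` in the induced subgraph `G[A]`: the number of neighbors of `v`
lying in `A`. -/
def degIn {V : Type*} [DecidableEq V] (G : SimpleGraph V) [DecidableRel G.Adj]
    (A : Finset V) (v : V) : ℕ :=
  (A.filter (fun u => G.Adj v u)).card

/-- The minimum degree of the induced subgraph `G[A]` (0 if `A` is empty). -/
def minDegIn {V : Type*} [DecidableEq V] (G : SimpleGraph V) [DecidableRel G.Adj]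
    (A : Finset V) : ℕ :=
  if h : A.Nonempty then A.inf' h (degIn G A) else 0

/-- Greedy peeling computes the maximum min-degree subgraph: if each step removes a
vertex of minimum degree of the current induced subgraph until the graph is empty,
then the maximum over the steps of the minimum degree equals the maximum of the
minimum degree over all induced subgraphs of `G`. -/
theorem peeling_computes_max_minDeg {V : Type*} [Fintype V] [DecidableEq V] [Nonempty V]
    (G : SimpleGraph V) [DecidableRel G.Adj]
    (Vt : ℕ → Finset V) (rem : ℕ → V) (n : ℕ)
    (h0 : Vt 0 = Finset.univ) (hn : Vt n = ∅)
    (hstep : ∀ t, (Vt t).Nonempty →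
      rem t ∈ Vt t ∧ Vt (t + 1) = (Vt t).erase (rem t) ∧
      ∀ u ∈ Vt t, degIn G (Vt t) (rem t) ≤ degIn G (Vt t) u) :
    (Finset.range n).sup (fun t => minDegIn G (Vt t)) =
      Finset.univ.sup (fun A : Finset V => minDegIn G A) := by
  apply le_antisymm
  · exact Finset.sup_le fun t _ => Finset.le_sup (f := fun A : Finset V => minDegIn G A)
      (Finset.mem_univ (Vt t))
  · apply Finset.sup_le
    intro A _
    by_cases hA : A.Nonempty
    · obtain ⟨t, htn, hsub, hnsub⟩ := exists_last_aux (P := fun t => A ⊆ Vt t) n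
        (by show A ⊆ Vt 0; rw [h0]; exact A.subset_univ)
        (by show ¬ A ⊆ Vt n; rw [hn]; exact fun h => hA.ne_empty (Finset.subset_empty.mp h))
      have hVt : (Vt t).Nonempty := hA.mono hsub
      obtain ⟨hmem, heq, hmin⟩ := hstep t hVt
      have hrA : rem t ∈ A := by
        by_contra hr
        exact hnsub (heq ▸ fun x hx =>
          Finset.mem_erase.2 ⟨fun e => hr (e ▸ hx), hsub hx⟩)
      have h1 : minDegIn G A ≤ degIn G A (rem t) := by
        unfold minDegIn; rw [dif_pos hA]; exact Finset.inf'_le _ hrA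
      have h2 : degIn G A (rem t) ≤ degIn G (Vt t) (rem t) :=
        Finset.card_le_card (Finset.filter_subset_filter _ hsub)
      have h3 : degIn G (Vt t) (rem t) ≤ minDegIn G (Vt t) := by
        unfold minDegIn; rw [dif_pos hVt]
        exact Finset.le_inf' hVt _ (fun u hu => hmin u hu)
      calc minDegIn G A ≤ minDegIn G (Vt t) := h1.trans (h2.trans h3)
        _ ≤ _ := Finset.le_sup (f := fun t => minDegIn G (Vt t)) (Finset.mem_range.2 htn)
    · simp [minDegIn, hA]
end
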